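/- Let A be a linear map from n×n real matrices into ℝ^m and let r ≤ n. Suppose that for every pair of orthogonal projection matrices P and Q onto r-dimensional subspaces of ℝ^n and every Y in the null space of A, one has ‖(I−P) Y (I−Q)‖_* ≥ ‖P Y Q‖_*. Then for every Y in the null space of A and every decomposition Y = Y₁ + Y₂ where rank(Y₁) = r and rank(Y₂) > r, it holds that ‖Y₁‖_* ≤ ‖Y₂‖_*. -/

import Mathlib

open Matrix

/-- The nuclear norm of a real matrix: the sum of its singular values,
i.e. the sum of the square roots of the eigenvalues of `Xᵀ * X`. -/
noncomputable def nuclearNorm {m n : Type*} [Fintype m] [Fintype n] [DecidableEq n]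
    (X : Matrix m n ℝ) : ℝ :=
  ∑ i, Real.sqrt ((Matrix.isHermitian_conjTranspose_mul_self X).eigenvalues i)

/-!
Let `P` and `Q` be the orthogonal projections onto the column and row spaces of `Y₁`, so that
`P Y₁ = Y₁ = Y₁ Q`. Then `P Y Q = Y₁ + P Y₂ Q` and `(I - P) Y (I - Q) = (I - P) Y₂ (I - Q)`, hence
`‖Y₁‖_* ≤ ‖P Y Q‖_* + ‖P Y₂ Q‖_* ≤ ‖(I - P) Y₂ (I - Q)‖_* + ‖P Y₂ Q‖_* ≤ ‖Y₂‖_*`,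
the last step being the pinching inequality. The triangle and pinching inequalities both follow
from the duality `‖X‖_* = max {tr (Wᵀ X) : W a contraction}`.
-/

section Contraction

variable {l m n : Type*} [Fintype m] [Fintype n]

def IsContraction (W : Matrix m n ℝ) : Prop :=
  ∀ x : n → ℝ, (W *ᵥ x) ⬝ᵥ (W *ᵥ x) ≤ x ⬝ᵥ x

lemma mulVec_dotProduct_mulVec [Fintype l] (M : Matrix m l ℝ) (N : Matrix m n ℝ)
    (a : l → ℝ) (b : n → ℝ) : (M *ᵥ a) ⬝ᵥ (N *ᵥ b) = a ⬝ᵥ ((Mᵀ * N) *ᵥ b) := by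
  conv_rhs => rw [← mulVec_mulVec, dotProduct_mulVec, vecMul_transpose]

lemma isContraction_iff {W : Matrix m n ℝ} :
    IsContraction W ↔ ∀ x : n → ℝ, x ⬝ᵥ ((Wᵀ * W) *ᵥ x) ≤ x ⬝ᵥ x := by
  simp only [IsContraction, mulVec_dotProduct_mulVec]

lemma IsContraction.neg {W : Matrix m n ℝ} (hW : IsContraction W) : IsContraction (-W) := by
  simpa [IsContraction, neg_mulVec] using hW

lemma IsContraction.mul [Fintype l] {W : Matrix m n ℝ} {V : Matrix n l ℝ}
    (hW : IsContraction W) (hV : IsContraction V) : IsContraction (W * V) := fun x => by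
  simpa only [← mulVec_mulVec] using (hW (V *ᵥ x)).trans (hV x)

lemma IsContraction.diag_transpose_mul_self_le_one [DecidableEq n] {W : Matrix m n ℝ}
    (hW : IsContraction W) (j : n) : (Wᵀ * W) j j ≤ 1 := by
  have h := hW (Pi.single j 1)
  rw [mulVec_dotProduct_mulVec] at h
  simpa [single_dotProduct] using h

end Contraction

section StarProjection

variable {m n : Type*} [Fintype m] [Fintype n]

lemma IsStarProjection.transpose_eq {P : Matrix m m ℝ} (hP : IsStarProjection P) : Pᵀ = P :=
  (isHermitian_iff_isSymm.mp hP.isSelfAdjoint).eq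

variable [DecidableEq m] [DecidableEq n]

lemma IsStarProjection.dotProduct_self_add {P : Matrix m m ℝ} (hP : IsStarProjection P)
    (a b : m → ℝ) :
    (P *ᵥ a + (1 - P) *ᵥ b) ⬝ᵥ (P *ᵥ a + (1 - P) *ᵥ b) =
      (P *ᵥ a) ⬝ᵥ (P *ᵥ a) + ((1 - P) *ᵥ b) ⬝ᵥ ((1 - P) *ᵥ b) := by
  have horth : (P *ᵥ a) ⬝ᵥ ((1 - P) *ᵥ b) = 0 := by
    rw [mulVec_dotProduct_mulVec, hP.transpose_eq, hP.mul_one_sub_self, zero_mulVec,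
      dotProduct_zero]
  rw [add_dotProduct, dotProduct_add, dotProduct_add, horth, dotProduct_comm ((1 - P) *ᵥ b), horth]
  ring

lemma IsStarProjection.dotProduct_self_eq {P : Matrix m m ℝ} (hP : IsStarProjection P)
    (x : m → ℝ) : x ⬝ᵥ x = (P *ᵥ x) ⬝ᵥ (P *ᵥ x) + ((1 - P) *ᵥ x) ⬝ᵥ ((1 - P) *ᵥ x) := by
  rw [← hP.dotProduct_self_add, ← add_mulVec, add_sub_cancel, one_mulVec]

lemma IsStarProjection.isContraction {P : Matrix m m ℝ} (hP : IsStarProjection P) :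
    IsContraction P := fun x => by
  have hnonneg := dotProduct_star_self_nonneg ((1 - P) *ᵥ x)
  rw [star_trivial] at hnonneg
  linarith [hP.dotProduct_self_eq x]

lemma IsContraction.pinching {P : Matrix m m ℝ} {Q : Matrix n n ℝ} (hP : IsStarProjection P)
    (hQ : IsStarProjection Q) {W₁ W₂ : Matrix m n ℝ} (h₁ : IsContraction W₁)
    (h₂ : IsContraction W₂) : IsContraction (P * W₁ * Q + (1 - P) * W₂ * (1 - Q)) := fun x => by
  have hW₁ := hP.isContraction.mul h₁ (Q *ᵥ x)
  have hW₂ := hP.one_sub.isContraction.mul h₂ ((1 - Q) *ᵥ x)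
  simp only [← mulVec_mulVec] at hW₁ hW₂
  simp only [add_mulVec, ← mulVec_mulVec]
  rw [hP.dotProduct_self_add, hQ.dotProduct_self_eq x]
  exact add_le_add hW₁ hW₂

end StarProjection

section ConjDiagonal

variable {n : Type*} [Fintype n] [DecidableEq n] {V : Matrix n n ℝ}

def conjDiagonal (V : Matrix n n ℝ) (d : n → ℝ) : Matrix n n ℝ := V * diagonal d * Vᵀ

lemma transpose_conjDiagonal (d : n → ℝ) : (conjDiagonal V d)ᵀ = conjDiagonal V d := by
  rw [conjDiagonal, transpose_mul, transpose_mul, transpose_transpose, diagonal_transpose,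
    Matrix.mul_assoc]

lemma conjDiagonal_mul_conjDiagonal (hV : Vᵀ * V = 1) (d e : n → ℝ) :
    conjDiagonal V d * conjDiagonal V e = conjDiagonal V (d * e) := by
  have hcancel : Vᵀ * (V * diagonal e * Vᵀ) = diagonal e * Vᵀ := by
    rw [← Matrix.mul_assoc, ← Matrix.mul_assoc, hV, Matrix.one_mul]
  rw [conjDiagonal, conjDiagonal, Matrix.mul_assoc _ Vᵀ, hcancel, Matrix.mul_assoc V,
    ← Matrix.mul_assoc (diagonal d), diagonal_mul_diagonal, ← Matrix.mul_assoc]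
  rfl

lemma one_sub_conjDiagonal (hV : Vᵀ * V = 1) (d : n → ℝ) :
    1 - conjDiagonal V d = conjDiagonal V (1 - d) := by
  have hdiag : diagonal (1 - d) = 1 - diagonal d := by rw [← diagonal_one', diagonal_sub]; rfl
  rw [conjDiagonal, conjDiagonal, hdiag, Matrix.mul_sub, Matrix.sub_mul, Matrix.mul_one,
    mul_eq_one_comm.mp hV]

lemma trace_conjDiagonal (hV : Vᵀ * V = 1) (d : n → ℝ) :
    trace (conjDiagonal V d) = ∑ i, d i := by
  rw [conjDiagonal, trace_mul_comm, ← Matrix.mul_assoc, hV, Matrix.one_mul, trace_diagonal]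

lemma rank_conjDiagonal (hV : Vᵀ * V = 1) (d : n → ℝ) :
    (conjDiagonal V d).rank = (diagonal d).rank := by
  rw [conjDiagonal, rank_mul_eq_left_of_isUnit_det _ _ (isUnit_det_of_right_inverse hV),
    rank_mul_eq_right_of_isUnit_det _ _ (isUnit_det_of_left_inverse hV)]

lemma dotProduct_conjDiagonal_mulVec_le (hV : Vᵀ * V = 1) {d : n → ℝ} (hd : d ≤ 1)
    (x : n → ℝ) : x ⬝ᵥ (conjDiagonal V d *ᵥ x) ≤ x ⬝ᵥ x := by
  have hquad : ∀ e : n → ℝ, x ⬝ᵥ (conjDiagonal V e *ᵥ x) = ∑ i, e i * (Vᵀ *ᵥ x) i ^ 2 := by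
    intro e
    rw [conjDiagonal, ← mulVec_mulVec, ← mulVec_mulVec, dotProduct_mulVec, ← mulVec_transpose]
    simp only [dotProduct, mulVec_diagonal]
    exact Finset.sum_congr rfl fun i _ => by ring
  have hnorm : x ⬝ᵥ x = x ⬝ᵥ (conjDiagonal V 1 *ᵥ x) := by
    rw [conjDiagonal, diagonal_one', Matrix.mul_one, mul_eq_one_comm.mp hV, one_mulVec]
  rw [hnorm, hquad, hquad]
  exact Finset.sum_le_sum fun i _ => mul_le_mul_of_nonneg_right (hd i) (sq_nonneg _)

end ConjDiagonal

section NuclearNorm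

variable {m n : Type*} [Fintype m] [Fintype n]

lemma trace_transpose_mul_le_sum_sqrt_mul_sqrt (A B : Matrix m n ℝ) :
    trace (Aᵀ * B) ≤ ∑ j, √((Aᵀ * A) j j) * √((Bᵀ * B) j j) := by
  simp only [trace, diag, mul_apply, transpose_apply]
  exact Finset.sum_le_sum fun j _ => by
    simpa only [sq] using Real.sum_mul_le_sqrt_mul_sqrt Finset.univ (A · j) (B · j)

lemma trace_transpose_mul_of_transpose_eq {P : Matrix m m ℝ} {Q : Matrix n n ℝ} (hP : Pᵀ = P)
    (hQ : Qᵀ = Q) (W X : Matrix m n ℝ) : trace ((P * W * Q)ᵀ * X) = trace (Wᵀ * (P * X * Q)) := by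
  rw [transpose_mul, transpose_mul, hP, hQ]
  simp only [Matrix.mul_assoc]
  rw [trace_mul_comm Q]
  simp only [Matrix.mul_assoc]

variable [DecidableEq n]

noncomputable def gramEigenvectors (X : Matrix m n ℝ) : Matrix n n ℝ :=
  (isHermitian_conjTranspose_mul_self X).eigenvectorUnitary

noncomputable def gramEigenvalues (X : Matrix m n ℝ) : n → ℝ :=
  (isHermitian_conjTranspose_mul_self X).eigenvalues

lemma gramEigenvectors_transpose_mul_self (X : Matrix m n ℝ) :
    (gramEigenvectors X)ᵀ * gramEigenvectors X = 1 := by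
  simpa [gramEigenvectors, star_eq_conjTranspose, conjTranspose_eq_transpose_of_trivial] using
    (mem_unitaryGroup_iff').mp (isHermitian_conjTranspose_mul_self X).eigenvectorUnitary.2

lemma transpose_mul_self_eq_conjDiagonal (X : Matrix m n ℝ) :
    Xᵀ * X = conjDiagonal (gramEigenvectors X) (gramEigenvalues X) := by
  simpa [conjDiagonal, gramEigenvectors, gramEigenvalues, star_eq_conjTranspose,
    conjTranspose_eq_transpose_of_trivial, Function.comp_def] using
    (isHermitian_conjTranspose_mul_self X).spectral_theorem

lemma nuclearNorm_eq_sum_sqrt_gramEigenvalues (X : Matrix m n ℝ) :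
    nuclearNorm X = ∑ i, √(gramEigenvalues X i) := rfl

lemma IsContraction.trace_transpose_mul_le_nuclearNorm {W : Matrix m n ℝ} (hW : IsContraction W)
    (X : Matrix m n ℝ) : trace (Wᵀ * X) ≤ nuclearNorm X := by
  have hV := gramEigenvectors_transpose_mul_self X
  have hXX := transpose_mul_self_eq_conjDiagonal X
  set V := gramEigenvectors X
  have hWV : IsContraction (W * V) :=
    hW.mul (isContraction_iff.mpr fun x => by rw [hV, one_mulVec])
  have hXV : (X * V)ᵀ * (X * V) = diagonal (gramEigenvalues X) := by
    rw [transpose_mul, Matrix.mul_assoc, ← Matrix.mul_assoc Xᵀ, hXX, conjDiagonal]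
    simp only [← Matrix.mul_assoc, hV, Matrix.one_mul]
    rw [Matrix.mul_assoc, hV, Matrix.mul_one]
  calc trace (Wᵀ * X) = trace ((W * V)ᵀ * (X * V)) := by
        rw [transpose_mul, Matrix.mul_assoc, trace_mul_comm Vᵀ, Matrix.mul_assoc,
          Matrix.mul_assoc, mul_eq_one_comm.mp hV, Matrix.mul_one]
    _ ≤ ∑ j, √(((W * V)ᵀ * (W * V)) j j) * √(((X * V)ᵀ * (X * V)) j j) :=
        trace_transpose_mul_le_sum_sqrt_mul_sqrt _ _
    _ ≤ ∑ j, 1 * √(gramEigenvalues X j) := by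
        gcongr with j
        · exact Real.sqrt_le_one.mpr (hWV.diag_transpose_mul_self_le_one j)
        · rw [hXV, diagonal_apply_eq]
    _ = nuclearNorm X := by simp only [one_mul, nuclearNorm_eq_sum_sqrt_gramEigenvalues]

lemma exists_isContraction_trace_transpose_mul_eq_nuclearNorm (X : Matrix m n ℝ) :
    ∃ W : Matrix m n ℝ, IsContraction W ∧ trace (Wᵀ * X) = nuclearNorm X := by
  have hV := gramEigenvectors_transpose_mul_self X
  have hXX := transpose_mul_self_eq_conjDiagonal X
  set V := gramEigenvectors X
  set ev := gramEigenvalues X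
  set g : n → ℝ := fun i => (√(ev i))⁻¹
  have hgev : g * ev = fun i => √(ev i) := funext fun i => by
    simp only [Pi.mul_apply, g, inv_mul_eq_div, Real.div_sqrt]
  -- `X * conjDiagonal V g` is the partial isometry of the polar decomposition of `X`.
  refine ⟨X * conjDiagonal V g, isContraction_iff.mpr fun x => ?_, ?_⟩
  · rw [transpose_mul, transpose_conjDiagonal, Matrix.mul_assoc, ← Matrix.mul_assoc Xᵀ, hXX,
      conjDiagonal_mul_conjDiagonal hV, conjDiagonal_mul_conjDiagonal hV, ← mul_assoc, hgev]
    exact dotProduct_conjDiagonal_mulVec_le hV (fun i => mul_inv_le_one) x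
  · rw [transpose_mul, transpose_conjDiagonal, Matrix.mul_assoc, hXX,
      conjDiagonal_mul_conjDiagonal hV, hgev,
      trace_conjDiagonal hV, nuclearNorm_eq_sum_sqrt_gramEigenvalues]

lemma nuclearNorm_sub_le (A B : Matrix m n ℝ) :
    nuclearNorm (A - B) ≤ nuclearNorm A + nuclearNorm B := by
  obtain ⟨W, hW, hWAB⟩ := exists_isContraction_trace_transpose_mul_eq_nuclearNorm (A - B)
  have hsplit : trace (Wᵀ * (A - B)) = trace (Wᵀ * A) + trace ((-W)ᵀ * B) := by
    rw [Matrix.mul_sub, trace_sub, transpose_neg, Matrix.neg_mul, trace_neg, sub_eq_add_neg]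
  rw [← hWAB, hsplit]
  exact add_le_add (hW.trace_transpose_mul_le_nuclearNorm A)
    (hW.neg.trace_transpose_mul_le_nuclearNorm B)

lemma nuclearNorm_pinching_le [DecidableEq m] {P : Matrix m m ℝ} {Q : Matrix n n ℝ}
    (hP : IsStarProjection P) (hQ : IsStarProjection Q) (X : Matrix m n ℝ) :
    nuclearNorm (P * X * Q) + nuclearNorm ((1 - P) * X * (1 - Q)) ≤ nuclearNorm X := by
  obtain ⟨W₁, hW₁, h₁⟩ := exists_isContraction_trace_transpose_mul_eq_nuclearNorm (P * X * Q)
  obtain ⟨W₂, hW₂, h₂⟩ :=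
    exists_isContraction_trace_transpose_mul_eq_nuclearNorm ((1 - P) * X * (1 - Q))
  calc nuclearNorm (P * X * Q) + nuclearNorm ((1 - P) * X * (1 - Q))
      = trace ((P * W₁ * Q + (1 - P) * W₂ * (1 - Q))ᵀ * X) := by
        rw [transpose_add, Matrix.add_mul, trace_add,
          trace_transpose_mul_of_transpose_eq hP.transpose_eq hQ.transpose_eq, h₁,
          trace_transpose_mul_of_transpose_eq hP.one_sub.transpose_eq hQ.one_sub.transpose_eq, h₂]
    _ ≤ nuclearNorm X := (hW₁.pinching hP hQ hW₂).trace_transpose_mul_le_nuclearNorm X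

end NuclearNorm

section RowSpaceProjection

variable {m n : Type*} [Fintype m] [Fintype n]

lemma exists_isStarProjection_rank_eq_mul_eq_self [DecidableEq n] (B : Matrix m n ℝ) :
    ∃ Q : Matrix n n ℝ, IsStarProjection Q ∧ Q.rank = B.rank ∧ B * Q = B := by
  have hV := gramEigenvectors_transpose_mul_self B
  have hBB := transpose_mul_self_eq_conjDiagonal B
  set V := gramEigenvectors B
  set ev := gramEigenvalues B
  -- `Q` projects onto the eigenvectors of `Bᵀ * B` with nonzero eigenvalue: the row space of `B`.
  set e : n → ℝ := fun i => if ev i = 0 then 0 else 1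
  have hee : e * e = e := funext fun i => by by_cases h : ev i = 0 <;> simp [e, h]
  have hker : (1 - e) * ev = 0 := funext fun i => by by_cases h : ev i = 0 <;> simp [e, h]
  refine ⟨conjDiagonal V e, ⟨?_, isHermitian_iff_isSymm.mpr (transpose_conjDiagonal e)⟩, ?_, ?_⟩
  · rw [IsIdempotentElem, conjDiagonal_mul_conjDiagonal hV, hee]
  · rw [rank_conjDiagonal hV, ← rank_transpose_mul_self B, hBB, rank_conjDiagonal hV, rank_diagonal,
      rank_diagonal]
    exact Fintype.card_congr (Equiv.subtypeEquivRight fun i => by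
      by_cases h : ev i = 0 <;> simp [e, h])
  · have hzero : (B * (1 - conjDiagonal V e))ᵀ * (B * (1 - conjDiagonal V e)) = 0 := by
      rw [one_sub_conjDiagonal hV, transpose_mul, transpose_conjDiagonal, Matrix.mul_assoc,
        ← Matrix.mul_assoc Bᵀ, hBB, conjDiagonal_mul_conjDiagonal hV,
        conjDiagonal_mul_conjDiagonal hV, ← mul_assoc, hker, zero_mul, conjDiagonal, diagonal_zero',
        Matrix.mul_zero, Matrix.zero_mul]
    rw [← conjTranspose_eq_transpose_of_trivial, conjTranspose_mul_self_eq_zero, Matrix.mul_sub,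
      Matrix.mul_one, sub_eq_zero] at hzero
    exact hzero.symm

lemma exists_isStarProjection_rank_eq_mul_self_eq [DecidableEq m] (B : Matrix m n ℝ) :
    ∃ P : Matrix m m ℝ, IsStarProjection P ∧ P.rank = B.rank ∧ P * B = B := by
  obtain ⟨P, hP, hrank, hBP⟩ := exists_isStarProjection_rank_eq_mul_eq_self Bᵀ
  refine ⟨P, hP, hrank.trans (rank_transpose B), ?_⟩
  simpa [transpose_mul, hP.transpose_eq] using congrArg transpose hBP

end RowSpaceProjection

theorem stmt6_general (n m r : ℕ)
    (A : Matrix (Fin n) (Fin n) ℝ →ₗ[ℝ] (Fin m → ℝ))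
    (hcond : ∀ P Q : Matrix (Fin n) (Fin n) ℝ,
      Pᵀ = P → P * P = P → P.rank = r →
      Qᵀ = Q → Q * Q = Q → Q.rank = r →
      ∀ Y : Matrix (Fin n) (Fin n) ℝ, A Y = 0 →
        nuclearNorm (P * Y * Q) ≤ nuclearNorm ((1 - P) * Y * (1 - Q))) :
    ∀ Y Y₁ Y₂ : Matrix (Fin n) (Fin n) ℝ, A Y = 0 → Y = Y₁ + Y₂ →
      Y₁.rank = r → r < Y₂.rank → nuclearNorm Y₁ ≤ nuclearNorm Y₂ := by
  rintro Y Y₁ Y₂ hY rfl hrank -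
  obtain ⟨P, hP, hPrank, hPY₁⟩ := exists_isStarProjection_rank_eq_mul_self_eq Y₁
  obtain ⟨Q, hQ, hQrank, hY₁Q⟩ := exists_isStarProjection_rank_eq_mul_eq_self Y₁
  have hcompress : P * (Y₁ + Y₂) * Q = Y₁ + P * Y₂ * Q := by
    rw [Matrix.mul_add, Matrix.add_mul, hPY₁, hY₁Q]
  have hcompl : (1 - P) * (Y₁ + Y₂) * (1 - Q) = (1 - P) * Y₂ * (1 - Q) := by
    rw [Matrix.mul_add, Matrix.sub_mul 1 P Y₁, Matrix.one_mul, hPY₁, sub_self, zero_add]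
  have hnull := hcond P Q hP.transpose_eq hP.isIdempotentElem (hPrank.trans hrank)
    hQ.transpose_eq hQ.isIdempotentElem (hQrank.trans hrank) _ hY
  rw [hcompress, hcompl] at hnull
  calc nuclearNorm Y₁ = nuclearNorm (Y₁ + P * Y₂ * Q - P * Y₂ * Q) := by rw [add_sub_cancel_right]
    _ ≤ nuclearNorm (Y₁ + P * Y₂ * Q) + nuclearNorm (P * Y₂ * Q) := nuclearNorm_sub_le _ _
    _ ≤ nuclearNorm (P * Y₂ * Q) + nuclearNorm ((1 - P) * Y₂ * (1 - Q)) := by linarith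
    _ ≤ nuclearNorm Y₂ := nuclearNorm_pinching_le hP hQ Y₂

/-- If `‖(I−P) Y (I−Q)‖_* ≥ ‖P Y Q‖_*` holds for every pair of rank-`r`
orthogonal projections `P`, `Q` and every `Y` in the null space of `A`, then
every null-space decomposition `Y = Y₁ + Y₂` with `rank Y₁ = r` and
`rank Y₂ > r` satisfies `‖Y₁‖_* ≤ ‖Y₂‖_*`. -/
theorem stmt6 (n m r : ℕ) (hr : r ≤ n)
    (A : Matrix (Fin n) (Fin n) ℝ →ₗ[ℝ] (Fin m → ℝ))
    (hcond : ∀ P Q : Matrix (Fin n) (Fin n) ℝ,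
      Pᵀ = P → P * P = P → P.rank = r →
      Qᵀ = Q → Q * Q = Q → Q.rank = r →
      ∀ Y : Matrix (Fin n) (Fin n) ℝ, A Y = 0 →
        nuclearNorm (P * Y * Q) ≤ nuclearNorm ((1 - P) * Y * (1 - Q))) :
    ∀ Y Y₁ Y₂ : Matrix (Fin n) (Fin n) ℝ, A Y = 0 → Y = Y₁ + Y₂ →
      Y₁.rank = r → r < Y₂.rank → nuclearNorm Y₁ ≤ nuclearNorm Y₂ :=
  stmt6_general n m r A hcond
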